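/- arXiv:cond-mat/0404483 — 2 statements merged into one kernel-verified Lean document; each statement's English description precedes it below -/
import Mathlib

section
/- For every integer d ≥ 1 and every ρ ∈ (0,1), the free-electron energy density satisfies e(ρ) < 0. -/
open MeasureTheory

/-- The tight-binding dispersion relation `ε(k) = -2 Σᵢ cos kᵢ`. -/
noncomputable def eps (d : ℕ) (k : Fin d → ℝ) : ℝ := -2 * ∑ i, Real.cos (k i)

/-- `R(E) = (2π)^{-d} λ({k ∈ [-π,π]^d : ε(k) < E})`. -/
noncomputable def Rfun (d : ℕ) (E : ℝ) : ℝ :=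
  (volume {k : Fin d → ℝ | (∀ i, k i ∈ Set.Icc (-Real.pi) Real.pi) ∧ eps d k < E}).toReal
    / (2 * Real.pi) ^ d

/-- `(2π)^{-d} ∫_{k ∈ [-π,π]^d, ε(k) < E} ε(k) dk`. -/
noncomputable def en (d : ℕ) (E : ℝ) : ℝ :=
  (∫ k in {k : Fin d → ℝ | (∀ i, k i ∈ Set.Icc (-Real.pi) Real.pi) ∧ eps d k < E},
    eps d k) / (2 * Real.pi) ^ d

/-!
The dispersion `ε` has mean zero over the Brillouin zone, since each `cos kᵢ` integrates to
zero over `[-π, π]`. For a mean-zero function, the integral over a strict sublevel set `{ε < E}`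
of measure strictly between `0` and the full measure is negative: if `E ≤ 0` the integrand is
negative there, and if `E > 0` it equals minus the integral over the complement, where
`ε ≥ E > 0`.
-/

open Set Real

theorem integral_comp_eval_eq_prod_smul {ι : Type*} [Fintype ι] {X : ι → Type*}
    [∀ i, MeasurableSpace (X i)] {μ : ∀ i, Measure (X i)} [∀ i, IsFiniteMeasure (μ i)]
    {E : Type*} [NormedAddCommGroup E] [NormedSpace ℝ E] [DecidableEq ι] {i : ι} {f : X i → E}
    (hf : AEStronglyMeasurable f (μ i)) :
    ∫ x, f (x i) ∂Measure.pi μ =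
      (∏ j ∈ Finset.univ.erase i, (μ j).real univ) • ∫ x, f x ∂μ i := by
  rw [← integral_map (measurable_pi_apply i).aemeasurable
    (by rw [Measure.pi_map_eval]; exact hf.smul_measure _), Measure.pi_map_eval,
    integral_smul_measure, ENNReal.toReal_prod]
  rfl

theorem setIntegral_setOf_lt_neg_of_integral_eq_zero {α : Type*} [MeasurableSpace α]
    {μ : Measure α} [IsFiniteMeasure μ] {f : α → ℝ} (hf : Integrable f μ)
    (h0 : ∫ x, f x ∂μ = 0) {E : ℝ} (hpos : 0 < μ.real {x | f x < E})
    (hlt : μ.real {x | f x < E} < μ.real univ) :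
    ∫ x in {x | f x < E}, f x ∂μ < 0 := by
  set S := {x | f x < E}
  have hS : NullMeasurableSet S μ := nullMeasurableSet_lt hf.aemeasurable aemeasurable_const
  rcases le_or_gt E 0 with hE | hE
  · have hneg (x : α) (hx : x ∈ S) : f x < 0 := lt_of_lt_of_le hx hE
    have hsupport : Function.support (fun x => -f x) ∩ S = S :=
      inter_eq_self_of_subset_right fun x hx => neg_ne_zero.mpr (hneg x hx).ne
    have hpos_neg : 0 < ∫ x in S, -f x ∂μ := by
      rw [setIntegral_pos_iff_support_of_nonneg_ae (f := fun x => -f x)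
        ((ae_restrict_mem₀ hS).mono fun x hx => neg_nonneg.mpr (hneg x hx).le)
        hf.integrableOn.neg, hsupport]
      exact (ENNReal.toReal_pos_iff.mp hpos).1
    rw [integral_neg] at hpos_neg
    linarith
  · have hcompl : E * μ.real Sᶜ ≤ ∫ x in Sᶜ, f x ∂μ := by
      rw [mul_comm, ← smul_eq_mul, ← setIntegral_const]
      exact setIntegral_mono_on₀ integrableOn_const hf.integrableOn hS.compl
        fun x hx => not_lt.mp hx
    have hsplit := integral_add_compl₀ hS hf
    rw [measureReal_compl₀ hS] at hcompl
    nlinarith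

def brillouinZone (d : ℕ) : Set (Fin d → ℝ) := univ.pi fun _ => Icc (-π) π

lemma continuous_eps (d : ℕ) : Continuous (eps d) := by
  unfold eps
  fun_prop

lemma volume_real_brillouinZone (d : ℕ) : volume.real (brillouinZone d) = (2 * π) ^ d := by
  rw [brillouinZone, measureReal_def, volume_pi_pi]
  simp [Real.volume_Icc, two_mul, pi_pos.le]

lemma isCompact_brillouinZone (d : ℕ) : IsCompact (brillouinZone d) :=
  isCompact_univ_pi fun _ => isCompact_Icc

instance (d : ℕ) : IsFiniteMeasure (volume.restrict (brillouinZone d)) :=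
  isFiniteMeasure_restrict.mpr (isCompact_brillouinZone d).measure_ne_top

lemma integral_cos_Icc_neg_pi_pi : ∫ x in Icc (-π) π, cos x = 0 := by
  rw [integral_Icc_eq_integral_Ioc, ← intervalIntegral.integral_of_le (by linarith [pi_pos]),
    integral_cos]
  simp

lemma integral_eps_brillouinZone (d : ℕ) : ∫ k in brillouinZone d, eps d k = 0 := by
  classical
  have hcos (i : Fin d) : ∫ k in brillouinZone d, cos (k i) = 0 := by
    rw [brillouinZone, volume_pi, Measure.restrict_pi_pi,
      integral_comp_eval_eq_prod_smul continuous_cos.aestronglyMeasurable,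
      integral_cos_Icc_neg_pi_pi, smul_zero]
  have hint (i : Fin d) :
      Integrable (fun k : Fin d → ℝ => cos (k i)) (volume.restrict (brillouinZone d)) :=
    ContinuousOn.integrableOn_compact (isCompact_brillouinZone d) (by fun_prop)
  simp only [eps, integral_const_mul, integral_finsetSum _ fun i _ => hint i, hcos,
    Finset.sum_const_zero, mul_zero]

lemma fermiSea_eq (d : ℕ) (E : ℝ) :
    {k : Fin d → ℝ | (∀ i, k i ∈ Icc (-π) π) ∧ eps d k < E} =
      {k | eps d k < E} ∩ brillouinZone d := by
  ext k
  simp only [brillouinZone, mem_pi, mem_univ, true_implies, mem_ofPred_eq, mem_inter_iff,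
    and_comm]

theorem stmt2_general (d : ℕ) (ρ : ℝ) (hρ : ρ ∈ Set.Ioo (0:ℝ) 1)
    (E : ℝ) (hR : Rfun d E = ρ) :
    en d E < 0 := by
  have hc : 0 < (2 * π) ^ d := by positivity
  have hmeas : MeasurableSet {k | eps d k < E} :=
    measurableSet_lt (continuous_eps d).measurable measurable_const
  have hsea : (volume.restrict (brillouinZone d)).real {k | eps d k < E} = ρ * (2 * π) ^ d := by
    rw [Rfun, fermiSea_eq, div_eq_iff hc.ne'] at hR
    rw [measureReal_restrict_apply hmeas]
    exact hR
  have hsea_neg := setIntegral_setOf_lt_neg_of_integral_eq_zero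
    ((continuous_eps d).continuousOn.integrableOn_compact (isCompact_brillouinZone d))
    (integral_eps_brillouinZone d) (E := E)
    (by rw [hsea]; exact mul_pos hρ.1 hc)
    (by rw [hsea, measureReal_restrict_apply_univ, volume_real_brillouinZone]
        nlinarith [hρ.2])
  rw [Measure.restrict_restrict hmeas] at hsea_neg
  rw [en, fermiSea_eq]
  exact div_neg_of_neg_of_pos hsea_neg hc

/-- For every `d ≥ 1` and every `ρ ∈ (0,1)`, the free-electron energy density is
negative: `e(ρ) < 0`, where `e(ρ)` is computed at the Fermi energy, i.e. at the
(unique) `E ∈ (-2d,2d)` with `R(E) = ρ`. -/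
theorem stmt2 (d : ℕ) (hd : 1 ≤ d) (ρ : ℝ) (hρ : ρ ∈ Set.Ioo (0:ℝ) 1)
    (E : ℝ) (hE : E ∈ Set.Ioo (-(2*(d:ℝ))) (2*(d:ℝ))) (hR : Rfun d E = ρ) :
    en d E < 0 :=
  stmt2_general d ρ hρ E hR
end

section
/- Let d ≥ 1, let A ⊆ ℤ^d be a finite nonempty set, and let n ≥ 1 be an integer. Then #{x ∈ ℤ^d : dist₁(x, A) = n} ≤ d^{n−1} · B(A). -/
/-!
Let `dist₁(x, A) = n` and let `a ∈ A` be a nearest point to `x`. For each direction `ε eᵢ`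
(`ε = ±1`) with `ε (xᵢ - aᵢ) > 0`, the neighbour `a + ε eᵢ` is strictly closer to `x`, hence not
in `A`, so `(a, a + ε eᵢ)` is a boundary edge; charge it `ε (xᵢ - aᵢ)`. The charges of `x` add up
to `|x - a|₁ = n`. An edge `(a, a + ε eᵢ)` receives at most `Σ (ε vᵢ)⁺` over the sphere
`|v|₁ = n`; on the half `ε vᵢ > 0` the other coordinates `u` determine `v`, with
`|vᵢ| = n - |u|₁`, so this is at most `Σ_{u ∈ ℤ^{d-1}} (n - |u|₁)⁺ ≤ n d^{n-1}` (induction on the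
dimension plus the binomial theorem). Hence `n · #{x : dist₁(x, A) = n} ≤ n d^{n-1} B(A)`.
-/

/-- The `ℓ¹` distance `|x - y|₁ = Σᵢ |xᵢ - yᵢ|` on `ℤ^d`. -/
def dist1 {d : ℕ} (x y : Fin d → ℤ) : ℕ := ∑ i, (x i - y i).natAbs

/-- `dist₁(x, A) = min_{a ∈ A} |x - a|₁`. -/
noncomputable def distA {d : ℕ} (x : Fin d → ℤ) (A : Set (Fin d → ℤ)) : ℕ :=
  sInf {n | ∃ a ∈ A, dist1 x a = n}

/-- The boundary `B(A)`: the number of pairs `(x, y)` with `x ∈ A`, `y ∉ A`,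
`|x - y|₁ = 1`. -/
noncomputable def bdry {d : ℕ} (A : Set (Fin d → ℤ)) : ℕ :=
  Set.ncard {p : (Fin d → ℤ) × (Fin d → ℤ) | p.1 ∈ A ∧ p.2 ∉ A ∧ dist1 p.1 p.2 = 1}

open Finset

def l1Norm {d : ℕ} (u : Fin d → ℤ) : ℕ := ∑ i, (u i).natAbs

lemma dist1_eq_l1Norm_sub {d : ℕ} (x y : Fin d → ℤ) : dist1 x y = l1Norm (x - y) := rfl

lemma natAbs_le_l1Norm {d : ℕ} (u : Fin d → ℤ) (j : Fin d) : (u j).natAbs ≤ l1Norm u :=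
  single_le_sum (f := fun j => (u j).natAbs) (fun _ _ => Nat.zero_le _) (mem_univ j)

lemma l1Norm_cons {c : ℕ} (s : ℤ) (u : Fin c → ℤ) :
    l1Norm (Fin.cons s u : Fin (c + 1) → ℤ) = s.natAbs + l1Norm u := by
  simp [l1Norm, Fin.sum_univ_succ]

lemma sum_piFinset_const_succ {α β : Type*} [AddCommMonoid β] {c : ℕ} (I : Finset α)
    (g : (Fin (c + 1) → α) → β) :
    ∑ u ∈ Fintype.piFinset (fun _ => I), g u
      = ∑ s ∈ I, ∑ u ∈ Fintype.piFinset (fun _ : Fin c => I), g (Fin.cons s u) := by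
  have := filter_piFinset_eq_map_consEquiv (fun _ : Fin (c + 1) => I) (fun _ => True)
  simp only [filter_true] at this
  rw [this, sum_map, sum_product]
  rfl

lemma two_mul_succ_le_succ_mul_choose {M k : ℕ} (hk : k < M) :
    2 * (k + 1) ≤ (M + 1) * M.choose k := by
  have h2 : 2 ≤ (M + 1).choose (k + 1) := by
    rw [Nat.choose_succ_succ]
    have := Nat.choose_pos hk.le
    have := Nat.choose_pos (Nat.succ_le_of_lt hk)
    omega
  rw [Nat.add_one_mul_choose_eq]
  exact Nat.mul_le_mul_right _ h2

lemma succ_mul_pow_add_two_mul_sum_le (q M : ℕ) :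
    (M + 1) * q ^ M + 2 * ∑ k ∈ range M, (k + 1) * q ^ k ≤ (M + 1) * (q + 1) ^ M := by
  rw [add_pow, sum_range_succ, mul_add, mul_sum, mul_sum, add_comm]
  simp only [one_pow, mul_one, Nat.choose_self, Nat.cast_id]
  refine add_le_add_left (sum_le_sum fun k hk => ?_) _
  calc 2 * ((k + 1) * q ^ k) = 2 * (k + 1) * q ^ k := by ring
    _ ≤ (M + 1) * M.choose k * q ^ k :=
        Nat.mul_le_mul_right _ (two_mul_succ_le_succ_mul_choose (mem_range.1 hk))
    _ = (M + 1) * (q ^ k * M.choose k) := by ring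

lemma sum_Icc_natAbs (h : ℕ → ℕ) (M : ℕ) :
    ∑ s ∈ Icc (-M : ℤ) M, h s.natAbs = h 0 + 2 * ∑ k ∈ range M, h (k + 1) := by
  induction M with
  | zero => simp
  | succ M ih =>
    have hIcc : Icc (-(M + 1 : ℕ) : ℤ) (M + 1 : ℕ)
        = insert (-(M + 1 : ℤ)) (insert ((M : ℤ) + 1) (Icc (-M : ℤ) M)) := by
      ext s; simp only [mem_Icc, mem_insert]; omega
    rw [hIcc, sum_insert (by simp; omega), sum_insert (by simp), ih, sum_range_succ]
    have h1 : (-(M + 1 : ℤ)).natAbs = M + 1 := by omega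
    have h2 : ((M : ℤ) + 1).natAbs = M + 1 := by omega
    rw [h1, h2]
    ring

-- With truncated subtraction, the left side counts the pairs `(t, u) ∈ ℕ × I^c` with
-- `t + |u|₁ ≤ M`.
lemma sum_piFinset_sub_l1Norm_le (c : ℕ) (I : Finset ℤ) (M : ℕ) :
    ∑ u ∈ Fintype.piFinset (fun _ : Fin c => I), (M + 1 - l1Norm u) ≤ (M + 1) * (c + 1) ^ M := by
  induction c generalizing M with
  | zero =>
    calc _ ≤ #(Fintype.piFinset (fun _ : Fin 0 => I)) • (M + 1) :=
          sum_le_card_nsmul _ _ _ fun u _ => Nat.sub_le _ _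
      _ = (M + 1) * (0 + 1) ^ M := by simp
  | succ c ih =>
    set P : ℕ → ℕ := fun m => (m + 1) * (c + 1) ^ m
    rw [sum_piFinset_const_succ]
    simp only [l1Norm_cons]
    calc ∑ s ∈ I, ∑ u ∈ Fintype.piFinset (fun _ : Fin c => I), (M + 1 - (s.natAbs + l1Norm u))
        ≤ ∑ s ∈ I, if s.natAbs ≤ M then P (M - s.natAbs) else 0 := by
          refine sum_le_sum fun s _ => ?_
          split_ifs with hs
          · calc _ = ∑ u ∈ Fintype.piFinset (fun _ : Fin c => I), (M - s.natAbs + 1 - l1Norm u) :=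
                  sum_congr rfl fun u _ => by omega
              _ ≤ P (M - s.natAbs) := ih _
          · exact (sum_eq_zero fun u _ => by omega).le
      _ = ∑ s ∈ I with s.natAbs ≤ M, P (M - s.natAbs) := (sum_filter _ _).symm
      _ ≤ ∑ s ∈ Icc (-M : ℤ) M, P (M - s.natAbs) :=
          sum_le_sum_of_subset fun s hs => by simp only [mem_filter, mem_Icc] at hs ⊢; omega
      _ = P M + 2 * ∑ k ∈ range M, P (M - 1 - k) := by
          rw [sum_Icc_natAbs (fun t => P (M - t))]
          simp only [Nat.sub_zero, Nat.sub_sub, add_comm 1]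
      _ = P M + 2 * ∑ k ∈ range M, P k := by rw [sum_range_reflect P M]
      _ ≤ (M + 1) * (c + 1 + 1) ^ M := succ_mul_pow_add_two_mul_sum_le (c + 1) M

section
variable {d : ℕ}

lemma dist1_comm (x y : Fin d → ℤ) : dist1 x y = dist1 y x :=
  sum_congr rfl fun i _ => by omega

lemma finite_setOf_dist1_le (a : Fin d → ℤ) (R : ℕ) : {x | dist1 x a ≤ R}.Finite := by
  refine (Set.Finite.pi fun j => Set.finite_Icc (a j - R) (a j + R)).subset fun x hx => ?_
  simp only [Set.mem_pi, Set.mem_univ, Set.mem_Icc, forall_true_left]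
  intro j
  have := (natAbs_le_l1Norm (x - a) j).trans ((dist1_eq_l1Norm_sub x a).symm.trans_le hx)
  simp only [Pi.sub_apply] at this
  omega

lemma dist1_eq_sum_units (x y : Fin d → ℤ) :
    dist1 x y = ∑ i, ∑ ε : ℤˣ, (ε * (x i - y i)).toNat := by
  refine sum_congr rfl fun i _ => ?_
  rw [UnitsInt.univ, sum_pair (units_ne_neg_self 1)]
  simp only [Units.val_one, one_mul, Units.val_neg, neg_mul, neg_sub]
  omega

lemma dist1_self_add_single (a : Fin d → ℤ) (i : Fin d) (ε : ℤˣ) :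
    dist1 a (a + Pi.single i (ε : ℤ)) = 1 := by
  simp [dist1, Pi.single_apply, apply_ite Int.natAbs]

lemma dist1_add_single_add_one {x a : Fin d → ℤ} {i : Fin d} {ε : ℤˣ}
    (h : 0 < ε * (x i - a i)) : dist1 x (a + Pi.single i (ε : ℤ)) + 1 = dist1 x a := by
  unfold dist1
  rw [← add_sum_erase _ _ (mem_univ i), ← add_sum_erase _ _ (mem_univ i)]
  have hrest : ∑ j ∈ univ.erase i, (x j - (a + Pi.single i (ε : ℤ) : Fin d → ℤ) j).natAbs
      = ∑ j ∈ univ.erase i, (x j - a j).natAbs :=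
    sum_congr rfl fun j hj => by simp [ne_of_mem_erase hj]
  rw [hrest]
  rcases Int.units_eq_one_or ε with rfl | rfl <;> simp at h ⊢ <;> omega

lemma sum_toNat_mul_sub_le_of_dist1_eq {M : ℕ} (i : Fin d) (ε : ℤˣ) (a : Fin d → ℤ)
    (V : Finset (Fin d → ℤ)) (hV : ∀ x ∈ V, dist1 x a = M + 1) :
    ∑ x ∈ V, (ε * (x i - a i)).toNat ≤ (M + 1) * d ^ M := by
  obtain ⟨c, rfl⟩ := Nat.exists_eq_add_one_of_ne_zero i.pos.ne'
  set ρ : (Fin (c + 1) → ℤ) → Fin c → ℤ := fun x => i.removeNth (x - a)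
  have hsplit : ∀ x ∈ V, (ε * (x i - a i)).natAbs + l1Norm (ρ x) = M + 1 := fun x hx => by
    rw [← hV x hx, Int.natAbs_mul, Int.units_natAbs, one_mul]
    exact (Fin.sum_univ_succAbove (fun j => (x j - a j).natAbs) i).symm
  have hinj : Set.InjOn ρ ↑({x ∈ V | 0 < ε * (x i - a i)} : Finset _) := by
    intro x hx y hy hxy
    rw [mem_coe, mem_filter] at hx hy
    have hx' := hsplit x hx.1
    have hy' := hsplit y hy.1
    rw [hxy] at hx'
    have hi : (x - a) i = (y - a) i :=
      (Units.mul_right_inj ε).1 (by simp only [Pi.sub_apply]; omega)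
    rw [← sub_left_inj (a := a), ← i.insertNth_self_removeNth (x - a),
      ← i.insertNth_self_removeNth (y - a), hi]
    exact congrArg _ hxy
  calc ∑ x ∈ V, (ε * (x i - a i)).toNat
      = ∑ x ∈ V with 0 < ε * (x i - a i), (M + 1 - l1Norm (ρ x)) := by
        rw [sum_filter]
        refine sum_congr rfl fun x hx => ?_
        have := hsplit x hx
        split_ifs <;> omega
    _ = ∑ u ∈ {x ∈ V | 0 < ε * (x i - a i)}.image ρ, (M + 1 - l1Norm u) :=
        (sum_image (f := fun u => M + 1 - l1Norm u) hinj).symm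
    _ ≤ ∑ u ∈ Fintype.piFinset (fun _ : Fin c => Icc (-(M + 1) : ℤ) (M + 1)),
          (M + 1 - l1Norm u) := by
        refine sum_le_sum_of_subset fun u hu => ?_
        obtain ⟨x, hx, rfl⟩ := mem_image.1 hu
        refine Fintype.mem_piFinset.2 fun j => mem_Icc.2 ?_
        have := natAbs_le_l1Norm (ρ x) j
        have := hsplit x (mem_filter.1 hx).1
        omega
    _ ≤ (M + 1) * (c + 1) ^ M := sum_piFinset_sub_l1Norm_le c _ M

lemma distA_le_dist1 {x b : Fin d → ℤ} {A : Set (Fin d → ℤ)} (hb : b ∈ A) :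
    distA x A ≤ dist1 x b :=
  Nat.sInf_le ⟨b, hb, rfl⟩

lemma exists_dist1_eq_distA {x : Fin d → ℤ} {A : Set (Fin d → ℤ)} (h : distA x A ≠ 0) :
    ∃ a ∈ A, dist1 x a = distA x A :=
  Nat.sInf_mem (Nat.nonempty_of_pos_sInf (Nat.pos_of_ne_zero h))

lemma toNat_mul_sub_eq_zero_of_add_single_mem {x a : Fin d → ℤ} {A : Set (Fin d → ℤ)}
    {i : Fin d} {ε : ℤˣ} (hx : dist1 x a = distA x A) (he : a + Pi.single i (ε : ℤ) ∈ A) :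
    (ε * (x i - a i)).toNat = 0 := by
  by_contra h
  have := dist1_add_single_add_one (x := x) (a := a) (i := i) (ε := ε) (by omega)
  have := distA_le_dist1 (x := x) he
  omega

lemma exists_nearest (A : Set (Fin d → ℤ)) :
    ∃ f : (Fin d → ℤ) → Fin d → ℤ, ∀ x, distA x A ≠ 0 → f x ∈ A ∧ dist1 x (f x) = distA x A := by
  choose f hf using fun x => (em (distA x A ≠ 0)).elim
    (fun hx => (exists_dist1_eq_distA hx).imp fun _ h _ => h) fun hx => ⟨x, (absurd · hx)⟩
  exact ⟨f, hf⟩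

lemma finite_setOf_distA_eq {A : Set (Fin d → ℤ)} (hA : A.Finite) {n : ℕ} (hn : n ≠ 0) :
    {x | distA x A = n}.Finite :=
  (hA.biUnion fun a _ => finite_setOf_dist1_le a n).subset fun x hx => by
    obtain ⟨a, ha, hxa⟩ := exists_dist1_eq_distA (hx.symm ▸ hn : distA x A ≠ 0)
    exact Set.mem_biUnion ha (hxa.trans hx).le

open Classical in
lemma sum_toNat_mul_sub_nearest_le {A : Set (Fin d → ℤ)} (hA : A.Finite) {M : ℕ}
    (S : Finset (Fin d → ℤ)) (f : (Fin d → ℤ) → Fin d → ℤ)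
    (hf : ∀ x ∈ S, f x ∈ A ∧ dist1 x (f x) = distA x A) (hS : ∀ x ∈ S, distA x A = M + 1)
    (i : Fin d) (ε : ℤˣ) :
    ∑ x ∈ S, (ε * (x i - f x i)).toNat
      ≤ (M + 1) * d ^ M * #{a ∈ hA.toFinset | a + Pi.single i (ε : ℤ) ∉ A} := by
  rw [← sum_fiberwise_of_maps_to (t := hA.toFinset) fun x hx => hA.mem_toFinset.2 (hf x hx).1,
    mul_comm _ (#_), ← smul_eq_mul, ← sum_const, sum_filter]
  refine sum_le_sum fun a _ => ?_
  have hfib : ∀ x ∈ S.filter (f · = a), dist1 x a = distA x A := fun x hx => by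
    obtain ⟨hxS, rfl⟩ := mem_filter.1 hx
    exact (hf x hxS).2
  calc ∑ x ∈ S with f x = a, (ε * (x i - f x i)).toNat
      = ∑ x ∈ S with f x = a, (ε * (x i - a i)).toNat :=
        sum_congr rfl fun x hx => by rw [(mem_filter.1 hx).2]
    _ ≤ _ := by
        split_ifs with he
        · exact (sum_eq_zero fun x hx =>
            toNat_mul_sub_eq_zero_of_add_single_mem (hfib x hx) he).le
        · exact sum_toNat_mul_sub_le_of_dist1_eq i ε a _ fun x hx =>
            (hfib x hx).trans (hS x (mem_filter.1 hx).1)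

open Classical in
lemma sum_card_add_single_notMem_le_bdry {A : Set (Fin d → ℤ)} (hA : A.Finite) :
    ∑ p : Fin d × ℤˣ, #{a ∈ hA.toFinset | a + Pi.single p.1 (p.2 : ℤ) ∉ A} ≤ bdry A := by
  have hE : {p : (Fin d → ℤ) × (Fin d → ℤ) | p.1 ∈ A ∧ p.2 ∉ A ∧ dist1 p.1 p.2 = 1}.Finite :=
    (hA.prod (hA.biUnion fun a _ => finite_setOf_dist1_le a 1)).subset fun p hp =>
      ⟨hp.1, Set.mem_biUnion hp.1 (by simp [dist1_comm, hp.2.2])⟩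
  rw [← card_sigma, ← Set.ncard_coe_finset]
  refine Set.ncard_le_ncard_of_injOn (fun q => (q.2, q.2 + Pi.single q.1.1 (q.1.2 : ℤ))) ?_ ?_ hE
  · intro q hq
    simp only [coe_sigma, Set.mem_sigma_iff, coe_filter] at hq
    exact ⟨hA.mem_toFinset.1 hq.2.1, hq.2.2, dist1_self_add_single _ _ _⟩
  · rintro ⟨⟨i, ε⟩, a⟩ - ⟨⟨i', ε'⟩, a'⟩ - h
    simp only [Prod.mk.injEq] at h
    obtain ⟨rfl, h⟩ := h
    have hs := add_left_cancel h
    obtain rfl : i = i' := by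
      by_contra hne
      simpa [hne] using congrFun hs i
    obtain rfl : ε = ε' := Units.ext (Pi.single_injective i hs)
    rfl

end

theorem stmt10_general (d : ℕ) (A : Set (Fin d → ℤ))
    (hfin : A.Finite) (n : ℕ) (hn : 1 ≤ n) :
    {x : Fin d → ℤ | distA x A = n}.ncard ≤ d ^ (n - 1) * bdry A := by
  classical
  obtain ⟨M, rfl⟩ := Nat.exists_eq_add_one_of_ne_zero (Nat.one_le_iff_ne_zero.1 hn)
  rw [Nat.add_sub_cancel]
  obtain ⟨f, hf⟩ := exists_nearest A
  have hS := finite_setOf_distA_eq hfin M.succ_ne_zero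
  set S := hS.toFinset
  have hSdist : ∀ x ∈ S, distA x A = M + 1 := fun x hx => hS.mem_toFinset.1 hx
  have hSf : ∀ x ∈ S, f x ∈ A ∧ dist1 x (f x) = distA x A := fun x hx =>
    hf x ((hSdist x hx).symm ▸ M.succ_ne_zero)
  rw [Set.ncard_eq_toFinset_card _ hS]
  refine Nat.le_of_mul_le_mul_left ?_ M.succ_pos
  calc (M + 1) * #S = ∑ x ∈ S, dist1 x (f x) := by
        rw [sum_congr rfl fun x hx => (hSf x hx).2.trans (hSdist x hx), sum_const, smul_eq_mul,
          mul_comm]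
    _ = ∑ p : Fin d × ℤˣ, ∑ x ∈ S, (p.2 * (x p.1 - f x p.1)).toNat := by
        simp only [dist1_eq_sum_units]
        rw [sum_comm, Fintype.sum_prod_type]
        exact sum_congr rfl fun i _ => sum_comm
    _ ≤ ∑ p : Fin d × ℤˣ, (M + 1) * d ^ M *
          #{a ∈ hfin.toFinset | a + Pi.single p.1 (p.2 : ℤ) ∉ A} :=
        sum_le_sum fun p _ => sum_toNat_mul_sub_nearest_le hfin S f hSf hSdist p.1 p.2
    _ ≤ (M + 1) * d ^ M * bdry A := by
        rw [← mul_sum]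
        exact Nat.mul_le_mul_left _ (sum_card_add_single_notMem_le_bdry hfin)
    _ = (M + 1) * (d ^ M * bdry A) := mul_assoc _ _ _

/-- For a finite nonempty `A ⊆ ℤ^d` and `n ≥ 1`, the number of points at
`ℓ¹`-distance `n` from `A` is at most `d^{n-1} · B(A)`. -/
theorem stmt10 (d : ℕ) (hd : 1 ≤ d) (A : Set (Fin d → ℤ))
    (hfin : A.Finite) (hne : A.Nonempty) (n : ℕ) (hn : 1 ≤ n) :
    {x : Fin d → ℤ | distA x A = n}.ncard ≤ d ^ (n - 1) * bdry A :=
  stmt10_general d A hfin n hn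
end
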